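/- arXiv:2303.03075 — 7 statements merged into one kernel-verified Lean document; each statement's English description precedes it below -/
import Mathlib

section
/- In the PRST scheme on a rooted tree with parameter α ∈ (0,1), every agent's share coefficient ω_i is nonnegative: for every non-root node i, ω_i ≥ 0. -/
/-!
Following parent pointers from any node ends in the fixed root, so no non-root node lies on a
cycle. Hence the subtree of `i` together with `i` itself sits inside the strict descendants of
`p i`, i.e. `|C i| + 1 ≤ |C (p i)|`. For `a + 1 ≤ b` the elementary inequality
`1 / (b - a) ≤ (a + 1) / b` makes both factors `base_i` and `total_i - base_i` nonnegative, so
`Ω ≥ 0` propagates from the root down the tree, and then `ω_i ≥ 0`.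
-/

open Function

theorem Function.IsPeriodicPt.eq_of_iterate_eq_isFixedPt {α : Type*} {f : α → α} {x s : α}
    {k m : ℕ} (hx : IsPeriodicPt f k x) (hk : 0 < k) (hs : IsFixedPt f s) (hm : f^[m] x = s) :
    x = s :=
  (hx.iterate m).eq_of_apply_eq_same ((hs.isPeriodicPt k).iterate m) hk
    (hm.trans (hs.iterate m).symm)

theorem one_div_sub_le_add_one_div {a b : ℝ} (ha : 0 ≤ a) (hab : a + 1 ≤ b) :
    1 / (b - a) ≤ (a + 1) / b := by
  rw [div_le_div_iff₀ (by linarith) (by linarith)]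
  nlinarith

namespace RootedTree

variable {V : Type*} {s : V} {p : V → V}

theorem forall_of_forall_reaches (hreach : ∀ v, ∃ n, p^[n] v = s) {P : V → Prop} (hs : P s)
    (hstep : ∀ v, v ≠ s → P (p v) → P v) (v : V) : P v := by
  obtain ⟨n, hn⟩ := hreach v
  induction n generalizing v with
  | zero => exact (show v = s from hn) ▸ hs
  | succ n ih =>
    by_cases hvs : v = s
    · exact hvs ▸ hs
    · exact hstep v hvs (ih (p v) hn)

variable (hroot : p s = s) (hreach : ∀ v, ∃ n, p^[n] v = s)
include hroot hreach

theorem iterate_ne_self {i : V} (hi : i ≠ s) {k : ℕ} (hk : 0 < k) : p^[k] i ≠ i := fun hcyc =>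
  hi <| (hreach i).elim fun _ hm => IsPeriodicPt.eq_of_iterate_eq_isFixedPt hcyc hk hroot hm

theorem card_add_one_le_card_parent {C : V → Finset V}
    (hC : ∀ i j, j ∈ C i ↔ j ≠ i ∧ ∃ n, p^[n] j = i) {i : V} (hi : i ≠ s) :
    (C i).card + 1 ≤ (C (p i)).card := by
  classical
  have hnotMem : i ∉ C i := fun h => ((hC i i).mp h).1 rfl
  have hsub : insert i (C i) ⊆ C (p i) := by
    intro j hj
    rcases Finset.mem_insert.mp hj with rfl | hj
    · exact (hC (p j) j).mpr ⟨(iterate_ne_self hroot hreach hi one_pos).symm, 1, rfl⟩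
    · obtain ⟨-, n, hn⟩ := (hC i j).mp hj
      refine (hC (p i) j).mpr ⟨?_, n + 1, by rw [iterate_succ_apply', hn]⟩
      rintro rfl
      exact iterate_ne_self hroot hreach hi n.succ_pos (by rw [iterate_succ_apply, hn])
  rw [← Finset.card_insert_of_notMem hnotMem]
  exact Finset.card_le_card hsub

end RootedTree

theorem prst_omega_nonneg_general {V : Type*} (s : V) (p : V → V) (C : V → Finset V)
    (ω Ω : V → ℝ) (α : ℝ) (hα0 : 0 < α) (hα1 : α < 1)
    (hroot : p s = s)
    (hreach : ∀ v, ∃ n, p^[n] v = s)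
    (hC : ∀ i j, j ∈ C i ↔ j ≠ i ∧ ∃ n, p^[n] j = i)
    (hΩs : Ω s = 1)
    (hω : ∀ i, i ≠ s → ω i =
      Ω (p i) * (1 / (((C (p i)).card : ℝ) - ((C i).card : ℝ)) +
        ((((C i).card : ℝ) + 1) / ((C (p i)).card : ℝ) -
          1 / (((C (p i)).card : ℝ) - ((C i).card : ℝ))) * α))
    (hΩ : ∀ i, i ≠ s → Ω i =
      Ω (p i) * ((((C i).card : ℝ) + 1) / ((C (p i)).card : ℝ) -
        1 / (((C (p i)).card : ℝ) - ((C i).card : ℝ))) * (1 - α)) :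
    ∀ i, i ≠ s → 0 ≤ ω i := by
  have hfactors : ∀ i, i ≠ s →
      0 ≤ 1 / (((C (p i)).card : ℝ) - ((C i).card : ℝ)) ∧
      0 ≤ (((C i).card : ℝ) + 1) / ((C (p i)).card : ℝ) -
        1 / (((C (p i)).card : ℝ) - ((C i).card : ℝ)) := fun i hi => by
    have hcard : ((C i).card : ℝ) + 1 ≤ (C (p i)).card := by
      exact_mod_cast RootedTree.card_add_one_le_card_parent hroot hreach hC hi
    exact ⟨one_div_nonneg.mpr (by linarith),
      sub_nonneg.mpr (one_div_sub_le_add_one_div (Nat.cast_nonneg _) hcard)⟩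
  have hΩ_nonneg : ∀ v, 0 ≤ Ω v :=
    RootedTree.forall_of_forall_reaches hreach (hΩs ▸ zero_le_one) fun v hv hpv =>
      hΩ v hv ▸ mul_nonneg (mul_nonneg hpv (hfactors v hv).2) (by linarith)
  intro i hi
  rw [hω i hi]
  exact mul_nonneg (hΩ_nonneg _)
    (add_nonneg (hfactors i hi).1 (mul_nonneg (hfactors i hi).2 hα0.le))

/-- PRST on a rooted tree: every non-root agent's share coefficient ω_i is nonnegative. -/
theorem prst_omega_nonneg {V : Type*} [Fintype V] (s : V) (p : V → V) (C : V → Finset V)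
    (ω Ω : V → ℝ) (α : ℝ) (hα0 : 0 < α) (hα1 : α < 1)
    (hroot : p s = s)
    (hreach : ∀ v, ∃ n, p^[n] v = s)
    (hC : ∀ i j, j ∈ C i ↔ j ≠ i ∧ ∃ n, p^[n] j = i)
    (hΩs : Ω s = 1)
    (hω : ∀ i, i ≠ s → ω i =
      Ω (p i) * (1 / (((C (p i)).card : ℝ) - ((C i).card : ℝ)) +
        ((((C i).card : ℝ) + 1) / ((C (p i)).card : ℝ) -
          1 / (((C (p i)).card : ℝ) - ((C i).card : ℝ))) * α))
    (hΩ : ∀ i, i ≠ s → Ω i =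
      Ω (p i) * ((((C i).card : ℝ) + 1) / ((C (p i)).card : ℝ) -
        1 / (((C (p i)).card : ℝ) - ((C i).card : ℝ))) * (1 - α)) :
    ∀ i, i ≠ s → 0 ≤ ω i :=
  prst_omega_nonneg_general s p C ω Ω α hα0 hα1 hroot hreach hC hΩs hω hΩ
end

section
/- In the PRST scheme, the pass-down proportions are nonnegative: Ω_i ≥ 0 for every node i (including the root, where Ω_s = 1). -/
/-!
Along the edge from `p i` to `i` the recursion multiplies by `1 - α ≥ 0` and by
`(k + 1)/m - 1/(m - k)`, where `k = |C i|` and `m = |C (p i)|`. Since `i` and its descendants are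
descendants of `p i`, we have `k + 1 ≤ m`, and then `(k + 1)(m - k) - m = k(m - k - 1) ≥ 0` shows
the factor is nonnegative. Nonnegativity then propagates from `Ω s = 1` down every path to `s`.
-/

open Function

namespace PRST

variable {V : Type*} {p : V → V} {s : V}

theorem eq_of_isPeriodicPt_of_iterate_eq {x : V} {k m : ℕ} (hs : IsFixedPt p s) (hk : 0 < k)
    (hx : IsPeriodicPt p k x) (hm : p^[m] x = s) : x = s := by
  have hle : m ≤ k * m := Nat.le_mul_of_pos_left m hk
  calc x = p^[k * m] x := ((hx.mul_const m).eq).symm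
    _ = p^[k * m - m] (p^[m] x) := by rw [← iterate_add_apply, Nat.sub_add_cancel hle]
    _ = s := by rw [hm, (hs.iterate _).eq]

theorem induction_of_iterate_eq (hreach : ∀ v, ∃ n, p^[n] v = s) {P : V → Prop} (base : P s)
    (step : ∀ i, i ≠ s → P (p i) → P i) (i : V) : P i := by
  obtain ⟨n, hn⟩ := hreach i
  induction n generalizing i with
  | zero => exact (show i = s from hn) ▸ base
  | succ n ih =>
    by_cases hi : i = s
    · exact hi ▸ base
    · exact step i hi (ih (p i) (by rwa [← iterate_succ_apply]))

variable {C : V → Finset V}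

theorem card_descendants_lt_card_parent (hroot : p s = s) (hreach : ∀ v, ∃ n, p^[n] v = s)
    (hC : ∀ i j, j ∈ C i ↔ j ≠ i ∧ ∃ n, p^[n] j = i) {i : V} (hi : i ≠ s) :
    (C i).card < (C (p i)).card := by
  have not_periodic : ∀ {k}, 0 < k → ¬IsPeriodicPt p k i := fun hk hper =>
    hi (eq_of_isPeriodicPt_of_iterate_eq hroot hk hper (hreach i).choose_spec)
  have mem_parent : i ∈ C (p i) :=
    (hC _ _).2 ⟨fun h => not_periodic one_pos h.symm, 1, rfl⟩
  have subset_parent : C i ⊆ C (p i) := by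
    intro j hj
    obtain ⟨-, n, hn⟩ := (hC i j).1 hj
    refine (hC _ _).2 ⟨?_, n + 1, by rw [iterate_succ_apply', hn]⟩
    rintro rfl
    exact not_periodic n.succ_pos (by rw [IsPeriodicPt, IsFixedPt, iterate_succ_apply, hn])
  exact Finset.card_lt_card <|
    (Finset.ssubset_iff_of_subset subset_parent).2 ⟨i, mem_parent, fun h => ((hC i i).1 h).1 rfl⟩

end PRST

theorem pass_down_factor_nonneg {k m : ℝ} (hk : 0 ≤ k) (hkm : k + 1 ≤ m) :
    0 ≤ (k + 1) / m - 1 / (m - k) := by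
  have hm : 0 < m := by linarith
  have hmk : 0 < m - k := by linarith
  rw [sub_nonneg, div_le_div_iff₀ hmk hm]
  nlinarith

theorem prst_Omega_nonneg_general {V : Type*} (s : V) (p : V → V) (C : V → Finset V)
    (Ω : V → ℝ) (α : ℝ) (hα1 : α < 1)
    (hroot : p s = s)
    (hreach : ∀ v, ∃ n, p^[n] v = s)
    (hC : ∀ i j, j ∈ C i ↔ j ≠ i ∧ ∃ n, p^[n] j = i)
    (hΩs : Ω s = 1)
    (hΩ : ∀ i, i ≠ s → Ω i =
      Ω (p i) * ((((C i).card : ℝ) + 1) / ((C (p i)).card : ℝ) -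
        1 / (((C (p i)).card : ℝ) - ((C i).card : ℝ))) * (1 - α)) :
    ∀ i, 0 ≤ Ω i := by
  refine PRST.induction_of_iterate_eq hreach (hΩs ▸ zero_le_one) fun i hi hparent => ?_
  have hcard : ((C i).card : ℝ) + 1 ≤ (C (p i)).card := by
    exact_mod_cast PRST.card_descendants_lt_card_parent hroot hreach hC hi
  rw [hΩ i hi]
  exact mul_nonneg (mul_nonneg hparent (pass_down_factor_nonneg (Nat.cast_nonneg _) hcard))
    (sub_nonneg.2 hα1.le)

/-- PRST: the pass-down proportions Ω_i are nonnegative for every node, including the root. -/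
theorem prst_Omega_nonneg {V : Type*} [Fintype V] (s : V) (p : V → V) (C : V → Finset V)
    (Ω : V → ℝ) (α : ℝ) (hα0 : 0 < α) (hα1 : α < 1)
    (hroot : p s = s)
    (hreach : ∀ v, ∃ n, p^[n] v = s)
    (hC : ∀ i j, j ∈ C i ↔ j ≠ i ∧ ∃ n, p^[n] j = i)
    (hΩs : Ω s = 1)
    (hΩ : ∀ i, i ≠ s → Ω i =
      Ω (p i) * ((((C i).card : ℝ) + 1) / ((C (p i)).card : ℝ) -
        1 / (((C (p i)).card : ℝ) - ((C i).card : ℝ))) * (1 - α)) :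
    ∀ i, 0 ≤ Ω i :=
  prst_Omega_nonneg_general s p C Ω α hα1 hroot hreach hC hΩs hΩ
end

section
/- In the PRST scheme, the subtree budget identity holds: for every non-root node i, ω_i + Σ_{j ∈ C_i} ω_j = ((|C_i|+1)/|C_{p_i}|)·Ω_{p_i}. -/
/-!
Adding the two defining formulas, the `α`-terms cancel:
`ω_i + Ω_i = (|C_i| + 1) / |C_{p_i}| · Ω_{p_i}`. The strict descendants of a non-root `i` are
the disjoint union of the subtrees `{c} ∪ C_c` of its children `c`, so
`|C_i| = Σ_c (|C_c| + 1)`. By strong induction on `|C_i|`, the subtree of each child carries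
`(|C_c| + 1) / |C_i| · Ω_i`, so all of `C_i` carries exactly `Ω_i` when `i` is not a leaf,
and the identity follows.
-/

structure IsParentMap {V : Type*} (p : V → V) (s : V) : Prop where
  apply_root : p s = s
  exists_iterate_eq_root : ∀ v, ∃ n, p^[n] v = s

def IsStrictDescendants {V : Type*} (p : V → V) (C : V → Finset V) : Prop :=
  ∀ i j, j ∈ C i ↔ j ≠ i ∧ ∃ n, p^[n] j = i

def children {V : Type*} [DecidableEq V] (p : V → V) (C : V → Finset V) (i : V) : Finset V :=
  {c ∈ C i | p c = i}

namespace IsParentMap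

variable {V : Type*} {p : V → V} {s : V}

theorem iterate_ne_self (hT : IsParentMap p s) {i : V} (hi : i ≠ s) {n : ℕ} (hn : 0 < n) :
    p^[n] i ≠ i := by
  intro hper
  obtain ⟨N, hN⟩ := hT.exists_iterate_eq_root i
  refine hi ?_
  calc i = p^[n * N] i := (Function.IsPeriodicPt.mul_const hper N).eq.symm
    _ = p^[n * N - N] (p^[N] i) := by
      rw [← Function.iterate_add_apply, Nat.sub_add_cancel (Nat.le_mul_of_pos_left N hn)]
    _ = s := by rw [hN, Function.iterate_fixed hT.apply_root]

theorem eq_of_iterate_eq_of_apply_eq (hT : IsParentMap p s) {i c c' j : V} (hi : i ≠ s)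
    (hc : p c = i) (hc' : p c' = i) {m m' : ℕ} (hm : p^[m] j = c) (hm' : p^[m'] j = c') :
    c = c' := by
  wlog hle : m ≤ m' generalizing c c' m m'
  · exact (this hc' hc hm' hm (le_of_not_ge hle)).symm
  obtain ⟨k, rfl⟩ := Nat.exists_eq_add_of_le hle
  rw [Nat.add_comm, Function.iterate_add_apply, hm] at hm'
  cases k with
  | zero => exact hm'
  | succ k =>
    rw [Function.iterate_succ_apply, hc] at hm'
    refine absurd ?_ (hT.iterate_ne_self hi k.succ_pos)
    rw [Function.iterate_succ_apply', hm', hc']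

variable {C : V → Finset V}

theorem root_notMem (hT : IsParentMap p s) (hC : IsStrictDescendants p C) (i : V) :
    s ∉ C i := by
  rw [hC]
  rintro ⟨hsi, n, hn⟩
  exact hsi (by rwa [Function.iterate_fixed hT.apply_root] at hn)

theorem mem_trans (hT : IsParentMap p s) (hC : IsStrictDescendants p C) {i c j : V}
    (hi : i ≠ s) (hj : j ∈ C c) (hc : c ∈ C i) : j ∈ C i := by
  obtain ⟨-, m, hm⟩ := (hC c j).1 hj
  obtain ⟨hci, n, hn⟩ := (hC i c).1 hc
  have hn0 : 0 < n := Nat.pos_of_ne_zero (by rintro rfl; exact hci hn)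
  have hji : p^[n + m] j = i := by rw [Function.iterate_add_apply, hm, hn]
  refine (hC i j).2 ⟨?_, n + m, hji⟩
  rintro rfl
  exact hT.iterate_ne_self hi (Nat.add_pos_left hn0 m) hji

theorem insert_subset (hT : IsParentMap p s) (hC : IsStrictDescendants p C) [DecidableEq V]
    {i c : V} (hi : i ≠ s) (hc : c ∈ C i) : insert c (C c) ⊆ C i :=
  Finset.insert_subset hc fun _ hj => hT.mem_trans hC hi hj hc

theorem card_lt_card (hT : IsParentMap p s) (hC : IsStrictDescendants p C) {i c : V}
    (hi : i ≠ s) (hc : c ∈ C i) : (C c).card < (C i).card := by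
  classical
  have hcc : c ∉ C c := fun h => ((hC c c).1 h).1 rfl
  exact Finset.card_lt_card ((Finset.ssubset_insert hcc).trans_subset (hT.insert_subset hC hi hc))

theorem exists_iterate_eq_of_mem_insert (hC : IsStrictDescendants p C) [DecidableEq V]
    {c j : V} (hj : j ∈ insert c (C c)) : ∃ m, p^[m] j = c := by
  rcases Finset.mem_insert.1 hj with rfl | hj
  · exact ⟨0, rfl⟩
  · exact ((hC c j).1 hj).2

variable [DecidableEq V]

theorem eq_biUnion_children (hT : IsParentMap p s) (hC : IsStrictDescendants p C)
    {i : V} (hi : i ≠ s) :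
    C i = (children p C i).biUnion fun c => insert c (C c) := by
  ext j
  simp only [Finset.mem_biUnion, children, Finset.mem_filter]
  constructor
  · intro hj
    obtain ⟨hji, n, hn⟩ := (hC i j).1 hj
    obtain ⟨k, rfl⟩ := Nat.exists_eq_add_one_of_ne_zero (n := n) (by rintro rfl; exact hji hn)
    have hpc : p (p^[k] j) = i := by rwa [← Function.iterate_succ_apply' p k j]
    have hci : p^[k] j ≠ i := by
      rintro hci
      rw [hci] at hpc
      exact hT.iterate_ne_self hi one_pos hpc
    refine ⟨p^[k] j, ⟨(hC i _).2 ⟨hci, 1, hpc⟩, hpc⟩, ?_⟩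
    by_cases hjc : j = p^[k] j
    · exact hjc ▸ Finset.mem_insert_self _ _
    · exact Finset.mem_insert_of_mem ((hC _ j).2 ⟨hjc, k, rfl⟩)
  · rintro ⟨c, ⟨hc, -⟩, hj⟩
    exact hT.insert_subset hC hi hc hj

theorem pairwiseDisjoint_children (hT : IsParentMap p s) (hC : IsStrictDescendants p C)
    {i : V} (hi : i ≠ s) :
    (children p C i : Set V).PairwiseDisjoint fun c => insert c (C c) := by
  intro c hc c' hc' hne
  simp only [Finset.coe_filter, children, Set.mem_ofPred_eq] at hc hc'
  refine Finset.disjoint_left.2 fun j hj hj' => hne ?_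
  obtain ⟨m, hm⟩ := exists_iterate_eq_of_mem_insert hC hj
  obtain ⟨m', hm'⟩ := exists_iterate_eq_of_mem_insert hC hj'
  exact hT.eq_of_iterate_eq_of_apply_eq hi hc.2 hc'.2 hm hm'

theorem sum_eq_sum_children {M : Type*} [AddCommMonoid M] (hT : IsParentMap p s)
    (hC : IsStrictDescendants p C) {i : V} (hi : i ≠ s) (f : V → M) :
    ∑ j ∈ C i, f j = ∑ c ∈ children p C i, (f c + ∑ j ∈ C c, f j) := by
  rw [hT.eq_biUnion_children hC hi, Finset.sum_biUnion (hT.pairwiseDisjoint_children hC hi)]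
  exact Finset.sum_congr rfl fun c _ => Finset.sum_insert fun h => ((hC c c).1 h).1 rfl

theorem card_eq_sum_children (hT : IsParentMap p s) (hC : IsStrictDescendants p C)
    {i : V} (hi : i ≠ s) :
    (C i).card = ∑ c ∈ children p C i, ((C c).card + 1) := by
  simp only [Finset.card_eq_sum_ones]
  rw [hT.sum_eq_sum_children hC hi]
  exact Finset.sum_congr rfl fun c _ => add_comm _ _

end IsParentMap

theorem prst_subtree_budget_general {V : Type*} (s : V) (p : V → V) (C : V → Finset V)
    (ω Ω : V → ℝ) (α : ℝ)
    (hroot : p s = s)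
    (hreach : ∀ v, ∃ n, p^[n] v = s)
    (hC : ∀ i j, j ∈ C i ↔ j ≠ i ∧ ∃ n, p^[n] j = i)
    (hω : ∀ i, i ≠ s → ω i =
      Ω (p i) * (1 / (((C (p i)).card : ℝ) - ((C i).card : ℝ)) +
        ((((C i).card : ℝ) + 1) / ((C (p i)).card : ℝ) -
          1 / (((C (p i)).card : ℝ) - ((C i).card : ℝ))) * α))
    (hΩ : ∀ i, i ≠ s → Ω i =
      Ω (p i) * ((((C i).card : ℝ) + 1) / ((C (p i)).card : ℝ) -
        1 / (((C (p i)).card : ℝ) - ((C i).card : ℝ))) * (1 - α)) :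
    ∀ i, i ≠ s →
      ω i + ∑ j ∈ C i, ω j = ((((C i).card : ℝ) + 1) / ((C (p i)).card : ℝ)) * Ω (p i) := by
  classical
  have hT : IsParentMap p s := ⟨hroot, hreach⟩
  intro i
  induction hn : (C i).card using Nat.strong_induction_on generalizing i with
  | _ n ih =>
    intro hi
    subst hn
    -- For a leaf `0 / 0 = 0`, so `hsum` holds there too, with both sides `0`.
    have hsum : ∑ j ∈ C i, ω j = ((C i).card / (C i).card : ℝ) * Ω i := calc
      ∑ j ∈ C i, ω j = ∑ c ∈ children p C i, (ω c + ∑ j ∈ C c, ω j) :=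
        hT.sum_eq_sum_children hC hi ω
      _ = ∑ c ∈ children p C i, (((C c).card : ℝ) + 1) / (C i).card * Ω i := by
        refine Finset.sum_congr rfl fun c hc => ?_
        obtain ⟨hci, hpc⟩ := Finset.mem_filter.1 hc
        have hcs : c ≠ s := fun h => hT.root_notMem hC i (h ▸ hci)
        simpa only [hpc] using ih _ (hT.card_lt_card hC hi hci) c rfl hcs
      _ = ((C i).card / (C i).card : ℝ) * Ω i := by
        rw [← Finset.sum_mul, ← Finset.sum_div]
        congr 2
        exact_mod_cast (hT.card_eq_sum_children hC hi).symm
    rw [hsum, hω i hi, hΩ i hi]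
    rcases eq_or_ne ((C i).card : ℝ) 0 with h0 | h0
    · rw [h0]; ring
    · rw [div_self h0]; ring

/-- PRST subtree budget identity: for every non-root node i,
ω_i + Σ_{j ∈ C_i} ω_j = ((|C_i|+1)/|C_{p_i}|)·Ω_{p_i}. -/
theorem prst_subtree_budget {V : Type*} [Fintype V] (s : V) (p : V → V) (C : V → Finset V)
    (ω Ω : V → ℝ) (α : ℝ) (hα0 : 0 < α) (hα1 : α < 1)
    (hroot : p s = s)
    (hreach : ∀ v, ∃ n, p^[n] v = s)
    (hC : ∀ i j, j ∈ C i ↔ j ≠ i ∧ ∃ n, p^[n] j = i)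
    (hΩs : Ω s = 1)
    (hω : ∀ i, i ≠ s → ω i =
      Ω (p i) * (1 / (((C (p i)).card : ℝ) - ((C i).card : ℝ)) +
        ((((C i).card : ℝ) + 1) / ((C (p i)).card : ℝ) -
          1 / (((C (p i)).card : ℝ) - ((C i).card : ℝ))) * α))
    (hΩ : ∀ i, i ≠ s → Ω i =
      Ω (p i) * ((((C i).card : ℝ) + 1) / ((C (p i)).card : ℝ) -
        1 / (((C (p i)).card : ℝ) - ((C i).card : ℝ))) * (1 - α)) :
    ∀ i, i ≠ s →
      ω i + ∑ j ∈ C i, ω j = ((((C i).card : ℝ) + 1) / ((C (p i)).card : ℝ)) * Ω (p i) :=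
  prst_subtree_budget_general s p C ω Ω α hroot hreach hC hω hΩ
end

section
/- In the PRST scheme, the total distributed proportion is exactly 1: Σ_{i ∈ N} ω_i = 1, where N is the set of all non-root nodes of the tree. -/
/-- PRST: the total distributed proportion over all non-root nodes is exactly 1. -/
theorem prst_total_share {V : Type*} [Fintype V] [DecidableEq V]
    (s : V) (p : V → V) (C : V → Finset V)
    (ω Ω : V → ℝ) (α : ℝ) (hα0 : 0 < α) (hα1 : α < 1)
    (hroot : p s = s)
    (hreach : ∀ v, ∃ n, p^[n] v = s)
    (hC : ∀ i j, j ∈ C i ↔ j ≠ i ∧ ∃ n, p^[n] j = i)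
    (hnonempty : ∃ v, v ≠ s)
    (hΩs : Ω s = 1)
    (hω : ∀ i, i ≠ s → ω i =
      Ω (p i) * (1 / (((C (p i)).card : ℝ) - ((C i).card : ℝ)) +
        ((((C i).card : ℝ) + 1) / ((C (p i)).card : ℝ) -
          1 / (((C (p i)).card : ℝ) - ((C i).card : ℝ))) * α))
    (hΩ : ∀ i, i ≠ s → Ω i =
      Ω (p i) * ((((C i).card : ℝ) + 1) / ((C (p i)).card : ℝ) -
        1 / (((C (p i)).card : ℝ) - ((C i).card : ℝ))) * (1 - α)) :
    ∑ i ∈ Finset.univ.filter (fun v => v ≠ s), ω i = 1 := by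
  classical
  -- depth function
  set d : V → ℕ := fun v => Nat.find (hreach v) with hd
  have hds : ∀ v, p^[d v] v = s := fun v => Nat.find_spec (hreach v)
  have hdmin : ∀ v n, n < d v → p^[n] v ≠ s := fun v n h => Nat.find_min (hreach v) h
  have hps : ∀ n, p^[n] s = s := by
    intro n; induction n with
    | zero => rfl
    | succ n ih => rw [Function.iterate_succ_apply', ih, hroot]
  have hge : ∀ v n, d v ≤ n → p^[n] v = s := by
    intro v n h
    have h2 : p^[(n - d v) + d v] v = s := by
      rw [Function.iterate_add_apply, hds, hps]
    rwa [Nat.sub_add_cancel h] at h2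
  have hkey : ∀ k n i, i ≠ s → p^[n] k = i → n < d k ∧ d k = n + d i := by
    intro k n i hi hni
    have hn : n < d k := by
      by_contra h
      push_neg at h
      exact hi (by rw [← hni]; exact hge k n h)
    refine ⟨hn, le_antisymm ?_ ?_⟩
    · have h1 : p^[d i + n] k = s := by rw [Function.iterate_add_apply, hni, hds]
      have h2 : d k ≤ d i + n := Nat.find_min' (hreach k) h1
      omega
    · have h1 : p^[(d k - n) + n] k = s := by
        rw [Nat.sub_add_cancel hn.le]; exact hds k
      rw [Function.iterate_add_apply, hni] at h1
      have h2 : d i ≤ d k - n := Nat.find_min' (hreach i) h1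
      omega
  have hmemC : ∀ i, i ≠ s → i ∈ C (p i) := by
    intro i hi
    rw [hC]
    have hne : i ≠ p i := by
      intro h
      have hit : ∀ n, p^[n] i = i := by
        intro n; induction n with
        | zero => rfl
        | succ n ih => rw [Function.iterate_succ_apply', ih, ← h]
      exact hi (by rw [← hds i, hit])
    exact ⟨hne, 1, by simp⟩
  have hmono : ∀ i k, k ∈ C i → d i < d k := by
    intro i k hk
    rw [hC] at hk
    obtain ⟨hki, n, hn⟩ := hk
    by_cases hi : i = s
    · have h0 : d s = 0 := Nat.le_zero.mp (Nat.find_min' (hreach s) rfl)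
      have h1 : d k ≠ 0 := by
        intro h
        apply hki
        rw [hi]
        have := hds k; rw [h] at this; exact this
      rw [hi]
      omega
    · obtain ⟨_, h2⟩ := hkey k n i hi hn
      have : n ≠ 0 := by rintro rfl; exact hki hn
      omega
  -- children
  set ch : V → Finset V := fun j => Finset.univ.filter (fun i => i ≠ s ∧ p i = j) with hch
  have hch_mem : ∀ i j, i ∈ ch j ↔ i ≠ s ∧ p i = j := by
    intro i j; simp [hch]
  have hchC : ∀ i j, i ∈ ch j → i ∈ C j := by
    intro i j hij
    obtain ⟨his, hpi⟩ := (hch_mem i j).mp hij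
    rw [← hpi]; exact hmemC i his
  have hchd : ∀ i j, i ∈ ch j → d i = d j + 1 := by
    intro i j hij
    obtain ⟨his, hpi⟩ := (hch_mem i j).mp hij
    by_cases hj : j = s
    · rw [hj]
      have h1 : d i ≤ 1 := Nat.find_min' (hreach i) (by simp [hpi, hj])
      have h2 : d i ≠ 0 := by
        intro h
        exact his (by have := hds i; rw [h] at this; exact this)
      have h0 : d s = 0 := Nat.le_zero.mp (Nat.find_min' (hreach s) rfl)
      omega
    · obtain ⟨_, h2⟩ := hkey i 1 j hj (by simp [hpi])
      omega
  have hanc : ∀ j i k, i ∈ ch j → k ∈ insert i (C i) → p^[d k - d i] k = i := by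
    intro j i k hi hk
    rcases Finset.mem_insert.mp hk with h | h
    · subst h; simp
    · rw [hC] at h
      obtain ⟨hki, n, hn⟩ := h
      have his : i ≠ s := ((hch_mem i j).mp hi).1
      obtain ⟨_, hdk⟩ := hkey k n i his hn
      have hnn : d k - d i = n := by omega
      rw [hnn, hn]
  have hdecomp : ∀ j, C j = (ch j).biUnion (fun i => insert i (C i)) := by
    intro j
    ext k
    simp only [Finset.mem_biUnion]
    constructor
    · intro hk
      obtain ⟨hkj, hex⟩ := (hC j k).mp hk
      have hn₀ : p^[Nat.find hex] k = j := Nat.find_spec hex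
      set n₀ := Nat.find hex with hn0def
      have hpos : n₀ ≠ 0 := by
        rintro h; rw [h] at hn₀; exact hkj hn₀
      have hpi : p (p^[n₀ - 1] k) = j := by
        have h := hn₀
        rw [show n₀ = n₀ - 1 + 1 by omega, Function.iterate_succ_apply'] at h
        exact h
      have his : p^[n₀ - 1] k ≠ s := by
        intro h
        have hjs : j = s := by rw [← hpi, h, hroot]
        exact Nat.find_min hex (show n₀ - 1 < n₀ by omega) (by rw [h, hjs])
      refine ⟨p^[n₀ - 1] k, (hch_mem _ _).mpr ⟨his, hpi⟩, ?_⟩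
      by_cases hki : k = p^[n₀ - 1] k
      · rw [← hki]; exact Finset.mem_insert_self _ _
      · exact Finset.mem_insert_of_mem ((hC _ k).mpr ⟨hki, n₀ - 1, rfl⟩)
    · rintro ⟨i, hi, hk⟩
      obtain ⟨his, hpi⟩ := (hch_mem i j).mp hi
      rcases Finset.mem_insert.mp hk with h | h
      · subst h; exact hchC k j hi
      · obtain ⟨hki, n, hn⟩ := (hC i k).mp h
        have hkj : k ≠ j := by
          intro hkj
          have h1 : d i < d k := hmono i k h
          have h2 : d j < d i := hmono j i (hchC i j hi)
          rw [hkj] at h1; omega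
        refine (hC j k).mpr ⟨hkj, n + 1, ?_⟩
        rw [Function.iterate_succ_apply', hn, hpi]
  have hcardN : ∀ j, (C j).card = ∑ i ∈ ch j, ((C i).card + 1) := by
    intro j
    rw [hdecomp j, Finset.card_biUnion]
    · refine Finset.sum_congr rfl fun i hi => ?_
      rw [Finset.card_insert_of_notMem (fun h => ((hC i i).mp h).1 rfl)]
    · intro x hx y hy hxy
      rw [Function.onFun, Finset.disjoint_left]
      intro k hkx hky
      exact hxy (by
        rw [← hanc j x k hx hkx, ← hanc j y k hy hky, hchd x j hx, hchd y j hy])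
  have hcard : ∀ j, ((C j).card : ℝ) = ∑ i ∈ ch j, (((C i).card : ℝ) + 1) := by
    intro j
    rw [hcardN j]
    push_cast
    ring
  have hleaf : ∀ i, i ≠ s → ch i = ∅ → Ω i = 0 := by
    intro i hi h
    have hCi : C i = ∅ := by rw [hdecomp i, h]; simp
    rw [hΩ i hi, hCi]
    simp
  have hint : ∀ j, ch j ≠ ∅ →
      ∑ i ∈ ch j, Ω j * ((((C i).card : ℝ) + 1) / ((C j).card : ℝ)) = Ω j := by
    intro j hj
    obtain ⟨i0, hi0⟩ := Finset.nonempty_of_ne_empty hj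
    have hC0 : ((C j).card : ℝ) ≠ 0 := by
      have h1 : 0 < (C j).card := Finset.card_pos.mpr ⟨i0, hchC i0 j hi0⟩
      exact_mod_cast h1.ne'
    calc ∑ i ∈ ch j, Ω j * ((((C i).card : ℝ) + 1) / ((C j).card : ℝ))
        = Ω j * ((∑ i ∈ ch j, (((C i).card : ℝ) + 1)) / ((C j).card : ℝ)) := by
          rw [Finset.sum_div, Finset.mul_sum]
      _ = Ω j := by rw [← hcard j, div_self hC0, mul_one]
  have hs_int : ch s ≠ ∅ := by
    obtain ⟨v, hv⟩ := hnonempty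
    have hdv : d v ≠ 0 := by
      intro h
      exact hv (by have := hds v; rw [h] at this; exact this)
    refine Finset.ne_empty_of_mem (a := p^[d v - 1] v) ?_
    rw [hch_mem]
    refine ⟨hdmin v (d v - 1) (by omega), ?_⟩
    have h := hds v
    rw [show d v = d v - 1 + 1 by omega, Function.iterate_succ_apply'] at h
    exact h
  have hωi : ∀ i, i ≠ s → ω i =
      Ω (p i) * ((((C i).card : ℝ) + 1) / ((C (p i)).card : ℝ)) - Ω i := by
    intro i hi
    rw [hω i hi, hΩ i hi]
    ring
  rw [Finset.sum_congr rfl (fun i hi => hωi i (Finset.mem_filter.mp hi).2),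
    Finset.sum_sub_distrib]
  have hfib : ∑ i ∈ Finset.univ.filter (fun v => v ≠ s),
      Ω (p i) * ((((C i).card : ℝ) + 1) / ((C (p i)).card : ℝ))
      = ∑ j ∈ Finset.univ, ∑ i ∈ ch j,
          Ω j * ((((C i).card : ℝ) + 1) / ((C j).card : ℝ)) := by
    rw [← Finset.sum_fiberwise_of_maps_to (g := p)
      (fun i _ => Finset.mem_univ (p i))]
    refine Finset.sum_congr rfl fun j _ => ?_
    have hset : (Finset.univ.filter (fun v => v ≠ s)).filter (fun i => p i = j) = ch j := by
      ext i
      simp [hch, Finset.mem_filter, and_assoc]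
    rw [hset]
    refine Finset.sum_congr rfl fun i hi => ?_
    rw [((hch_mem i j).mp hi).2]
  rw [hfib]
  have hsum1 : ∑ j ∈ Finset.univ, ∑ i ∈ ch j,
      Ω j * ((((C i).card : ℝ) + 1) / ((C j).card : ℝ))
      = ∑ j ∈ Finset.univ.filter (fun j => ch j ≠ ∅), Ω j := by
    rw [Finset.sum_filter]
    refine Finset.sum_congr rfl fun j _ => ?_
    by_cases h : ch j = ∅
    · rw [h]; simp [h]
    · rw [hint j h]; simp [h]
  have hsum2 : ∑ i ∈ Finset.univ.filter (fun v => v ≠ s), Ω i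
      = ∑ i ∈ (Finset.univ.filter (fun j => ch j ≠ ∅)).erase s, Ω i := by
    rw [← Finset.sum_filter_of_ne
      (p := fun i => ch i ≠ ∅) (s := Finset.univ.filter (fun v => v ≠ s))
      (fun i hi h => fun hc => h (hleaf i (Finset.mem_filter.mp hi).2 hc))]
    congr 1
    ext i
    simp only [Finset.mem_filter, Finset.mem_erase, Finset.mem_univ, true_and]
  rw [hsum1, hsum2,
    Finset.sum_erase_eq_sub (Finset.mem_filter.mpr ⟨Finset.mem_univ s, hs_int⟩)]
  rw [hΩs]
  ring
end

section
/- In the PRST scheme, blocking descendants never increases an agent's share: if agent i removes Δ ≥ 0 of its descendants (so that |C_i| decreases by Δ, and for each ancestor j of i, |C_j| decreases by Δ while the sibling counts |C_{p_j}| − |C_j| are unchanged), then the new coefficient ω_i' satisfies ω_i' ≤ ω_i. -/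
/-!
Along the path from `s` to `i` the weights satisfy `Ω_j = Ω_{p_j} · g(|C_j|, |C_{p_j}|) · (1 - α)` with
`g(a, A) = (a + 1)/A - 1/(A - a)`. Blocking shifts both arguments of every `g` on the path by the same
`Δ`, which keeps `A - a` and hence `1/(A - a)` fixed and can only decrease `(a + 1)/A` (as `a + 1 ≤ A`).
So every factor `g` shrinks while staying nonnegative, and induction from the root gives `Ω'_j ≤ Ω_j`;
the share `ω_i = Ω_{p_i} (1/(A - a) + g α)` is then monotone in both `Ω_{p_i}` and `g`.
-/

/-- The paper's `(|C_i| + 1)/|C_{p_i}| - 1/(|C_{p_i}| - |C_i|)` for `a = |C_i|`, `A = |C_{p_i}|`. -/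
noncomputable def prstExcess (a A : ℝ) : ℝ := (a + 1) / A - 1 / (A - a)

theorem prstExcess_nonneg {a A : ℝ} (ha : 0 ≤ a) (haA : a + 1 ≤ A) : 0 ≤ prstExcess a A := by
  have hA : 0 < A := by linarith
  have hAa : 0 < A - a := by linarith
  rw [prstExcess, sub_nonneg, div_le_div_iff₀ hAa hA]
  nlinarith

theorem prstExcess_le_add_add {a A δ : ℝ} (ha : 0 ≤ a) (haA : a + 1 ≤ A) (hδ : 0 ≤ δ) :
    prstExcess a A ≤ prstExcess (a + δ) (A + δ) := by
  have hA : 0 < A := by linarith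
  have hfrac : (a + 1) / A ≤ (a + δ + 1) / (A + δ) := by
    rw [div_le_div_iff₀ hA (by linarith)]
    nlinarith
  rw [prstExcess, prstExcess, add_sub_add_right_eq_sub]
  linarith

theorem prstExcess_natCast_le {a A a' A' Δ : ℕ} (haA : a + 1 ≤ A) (ha : a' + Δ = a)
    (hA : A' + Δ = A) : prstExcess a' A' ≤ prstExcess a A := by
  subst ha hA
  push_cast
  exact prstExcess_le_add_add (by positivity) (by exact_mod_cast (by omega : a' + 1 ≤ A'))
    (by positivity)

theorem prstExcess_natCast_nonneg {a A : ℕ} (haA : a + 1 ≤ A) : 0 ≤ prstExcess a A :=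
  prstExcess_nonneg (by positivity) (by exact_mod_cast haA)

/-- The paper's `ω_i / Ω_{p_i}`. -/
noncomputable def prstShare (a A α : ℝ) : ℝ := 1 / (A - a) + prstExcess a A * α

theorem prstShare_natCast_le {a A a' A' Δ : ℕ} {α : ℝ} (hα : 0 ≤ α) (haA : a + 1 ≤ A)
    (ha : a' + Δ = a) (hA : A' + Δ = A) :
    prstShare a' A' α ≤ prstShare a A α := by
  have hgap : (A : ℝ) - a = A' - a' := by
    rw [← ha, ← hA]
    push_cast
    ring
  rw [prstShare, prstShare, hgap]
  gcongr
  exact prstExcess_natCast_le haA ha hA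

theorem prstShare_natCast_nonneg {a A : ℕ} {α : ℝ} (hα : 0 ≤ α) (haA : a + 1 ≤ A) :
    0 ≤ prstShare a A α := by
  have hgap : (0 : ℝ) < A - a := by
    have : (a : ℝ) + 1 ≤ A := by exact_mod_cast haA
    linarith
  have := prstExcess_natCast_nonneg haA
  rw [prstShare]
  positivity

section BlockingPath

variable {V : Type*}

def IsBlockingPath (s : V) (p : V → V) (c c' : V → ℕ) (Δ n : ℕ) (j : V) : Prop :=
  p^[n] j = s ∧ (∀ k < n, p^[k] j ≠ s) ∧ ∀ k ≤ n, c' (p^[k] j) + Δ = c (p^[k] j)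

variable {s : V} {p : V → V} {c c' : V → ℕ} {Δ n : ℕ} {j : V}

namespace IsBlockingPath

theorem ne_root (h : IsBlockingPath s p c c' Δ (n + 1) j) : j ≠ s :=
  h.2.1 0 n.succ_pos

theorem drop (h : IsBlockingPath s p c c' Δ n j) : c' j + Δ = c j :=
  h.2.2 0 n.zero_le

theorem parent (h : IsBlockingPath s p c c' Δ (n + 1) j) : IsBlockingPath s p c c' Δ n (p j) := by
  obtain ⟨hpath, hne, hdrop⟩ := h
  refine ⟨hpath, fun k hk => ?_, fun k hk => ?_⟩
  · exact hne (k + 1) (by omega)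
  · exact hdrop (k + 1) (by omega)

theorem card_add_one_le (hcard : ∀ j, j ≠ s → c j + 1 ≤ c (p j))
    (h : IsBlockingPath s p c c' Δ (n + 1) j) : c' j + 1 ≤ c' (p j) := by
  have := hcard j h.ne_root
  have := h.drop
  have := h.parent.drop
  omega

theorem weight_nonneg_and_le {Ω Ω' : V → ℝ} {α : ℝ} (hα : α ≤ 1)
    (hΩs : Ω s = 1) (hΩ's : Ω' s = 1)
    (hcard : ∀ j, j ≠ s → c j + 1 ≤ c (p j))
    (hΩrec : ∀ j, j ≠ s → Ω j = Ω (p j) * prstExcess (c j) (c (p j)) * (1 - α))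
    (hΩ'rec : ∀ j, j ≠ s → Ω' j = Ω' (p j) * prstExcess (c' j) (c' (p j)) * (1 - α))
    (h : IsBlockingPath s p c c' Δ n j) : 0 ≤ Ω' j ∧ Ω' j ≤ Ω j := by
  induction n generalizing j with
  | zero =>
    obtain rfl : j = s := h.1
    simp [hΩs, hΩ's]
  | succ n ih =>
    have hj := h.ne_root
    obtain ⟨hΩ'p, hΩ'Ωp⟩ := ih h.parent
    have hg' : 0 ≤ prstExcess (c' j) (c' (p j)) :=
      prstExcess_natCast_nonneg (h.card_add_one_le hcard)
    have hg : prstExcess (c' j) (c' (p j)) ≤ prstExcess (c j) (c (p j)) :=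
      prstExcess_natCast_le (hcard j hj) h.drop h.parent.drop
    rw [hΩrec j hj, hΩ'rec j hj]
    have hα' : 0 ≤ 1 - α := by linarith
    exact ⟨by positivity, by gcongr; exact hΩ'p.trans hΩ'Ωp⟩

end IsBlockingPath

end BlockingPath

theorem prst_blocking_decreases_share_general {V : Type*} (s : V) (p : V → V)
    (c c' : V → ℕ) (ω ω' Ω Ω' : V → ℝ) (α : ℝ) (hα0 : 0 < α) (hα1 : α < 1)
    (hΩs : Ω s = 1) (hΩ's : Ω' s = 1)
    (hcard : ∀ j, j ≠ s → c j + 1 ≤ c (p j))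
    (hΩrec : ∀ j, j ≠ s → Ω j =
      Ω (p j) * (((c j : ℝ) + 1) / (c (p j) : ℝ) -
        1 / ((c (p j) : ℝ) - (c j : ℝ))) * (1 - α))
    (hΩ'rec : ∀ j, j ≠ s → Ω' j =
      Ω' (p j) * (((c' j : ℝ) + 1) / (c' (p j) : ℝ) -
        1 / ((c' (p j) : ℝ) - (c' j : ℝ))) * (1 - α))
    (hωrec : ∀ j, j ≠ s → ω j =
      Ω (p j) * (1 / ((c (p j) : ℝ) - (c j : ℝ)) +
        (((c j : ℝ) + 1) / (c (p j) : ℝ) - 1 / ((c (p j) : ℝ) - (c j : ℝ))) * α))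
    (hω'rec : ∀ j, j ≠ s → ω' j =
      Ω' (p j) * (1 / ((c' (p j) : ℝ) - (c' j : ℝ)) +
        (((c' j : ℝ) + 1) / (c' (p j) : ℝ) - 1 / ((c' (p j) : ℝ) - (c' j : ℝ))) * α))
    (i : V) (Δ m : ℕ) (hm : 1 ≤ m)
    (hpath : p^[m] i = s)
    (hne : ∀ k, k < m → p^[k] i ≠ s)
    (hdrop : ∀ k, k ≤ m → c' (p^[k] i) + Δ = c (p^[k] i)) :
    ω' i ≤ ω i := by
  obtain ⟨n, rfl⟩ : ∃ n, m = n + 1 := ⟨m - 1, by omega⟩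
  have h : IsBlockingPath s p c c' Δ (n + 1) i := ⟨hpath, hne, hdrop⟩
  have hi := h.ne_root
  obtain ⟨hΩ'p, hΩ'Ωp⟩ := h.parent.weight_nonneg_and_le hα1.le hΩs hΩ's hcard hΩrec hΩ'rec
  have hshare' := prstShare_natCast_nonneg hα0.le (h.card_add_one_le hcard)
  have hshare := prstShare_natCast_le hα0.le (hcard i hi) h.drop h.parent.drop
  rw [hωrec i hi, hω'rec i hi]
  exact mul_le_mul hΩ'Ωp hshare hshare' (hΩ'p.trans hΩ'Ωp)

/-- PRST: blocking descendants never increases an agent's share coefficient: ω_i' ≤ ω_i. -/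
theorem prst_blocking_decreases_share {V : Type*} (s : V) (p : V → V)
    (c c' : V → ℕ) (ω ω' Ω Ω' : V → ℝ) (α : ℝ) (hα0 : 0 < α) (hα1 : α < 1)
    (hroot : p s = s)
    (hΩs : Ω s = 1) (hΩ's : Ω' s = 1)
    (hcard : ∀ j, j ≠ s → c j + 1 ≤ c (p j))
    (hcard' : ∀ j, j ≠ s → c' j + 1 ≤ c' (p j))
    (hΩrec : ∀ j, j ≠ s → Ω j =
      Ω (p j) * (((c j : ℝ) + 1) / (c (p j) : ℝ) -
        1 / ((c (p j) : ℝ) - (c j : ℝ))) * (1 - α))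
    (hΩ'rec : ∀ j, j ≠ s → Ω' j =
      Ω' (p j) * (((c' j : ℝ) + 1) / (c' (p j) : ℝ) -
        1 / ((c' (p j) : ℝ) - (c' j : ℝ))) * (1 - α))
    (hωrec : ∀ j, j ≠ s → ω j =
      Ω (p j) * (1 / ((c (p j) : ℝ) - (c j : ℝ)) +
        (((c j : ℝ) + 1) / (c (p j) : ℝ) - 1 / ((c (p j) : ℝ) - (c j : ℝ))) * α))
    (hω'rec : ∀ j, j ≠ s → ω' j =
      Ω' (p j) * (1 / ((c' (p j) : ℝ) - (c' j : ℝ)) +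
        (((c' j : ℝ) + 1) / (c' (p j) : ℝ) - 1 / ((c' (p j) : ℝ) - (c' j : ℝ))) * α))
    (i : V) (Δ m : ℕ) (hm : 1 ≤ m)
    (hpath : p^[m] i = s)
    (hne : ∀ k, k < m → p^[k] i ≠ s)
    (hdrop : ∀ k, k ≤ m → c' (p^[k] i) + Δ = c (p^[k] i)) :
    ω' i ≤ ω i :=
  prst_blocking_decreases_share_general s p c c' ω ω' Ω Ω' α hα0 hα1 hΩs hΩ's hcard hΩrec hΩ'rec
    hωrec hω'rec i Δ m hm hpath hne hdrop
end

section
/- In the PRST scheme, if blocking descendants occurs below node i, then every ancestor's pass-down proportion weakly decreases: Ω_j' ≤ Ω_j for every ancestor j of i on the path from s to i. -/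
/-!
Walk down the path from the root `s`, where `Ω' s = Ω s = 1`. At an ancestor `j`, write
`c = |C_j'|` and `P = |C_{p_j}'|` for the counts after blocking. Blocking shifts both counts by `Δ`
and leaves their difference alone, so the new factor `(c + 1) / P - 1 / (P - c)` is nonnegative
and at most the old one `(c + Δ + 1) / (P + Δ) - 1 / (P - c)`. Hence `0 ≤ Ω'_{p_j} ≤ Ω_{p_j}`
propagates to `0 ≤ Ω'_j ≤ Ω_j`.
-/

noncomputable def passDownFactor (a P : ℝ) : ℝ := (a + 1) / P - 1 / (P - a)

lemma passDownFactor_nonneg {a P : ℝ} (ha : 0 ≤ a) (haP : a + 1 ≤ P) :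
    0 ≤ passDownFactor a P := by
  have hP : 0 < P := by linarith
  have hPa : 0 < P - a := by linarith
  rw [passDownFactor, sub_nonneg, div_le_div_iff₀ hPa hP]
  nlinarith

lemma passDownFactor_le_add {a P D : ℝ} (ha : 0 ≤ a) (haP : a + 1 ≤ P) (hD : 0 ≤ D) :
    passDownFactor a P ≤ passDownFactor (a + D) (P + D) := by
  have hP : 0 < P := by linarith
  have hfirst : (a + 1) / P ≤ (a + D + 1) / (P + D) := by
    rw [div_le_div_iff₀ hP (by linarith)]
    nlinarith
  unfold passDownFactor
  rw [add_sub_add_right_eq_sub]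
  linarith

lemma mul_passDownFactor_le {ω' ω a P D β : ℝ} (hω' : 0 ≤ ω') (hω'ω : ω' ≤ ω) (ha : 0 ≤ a)
    (haP : a + 1 ≤ P) (hD : 0 ≤ D) (hβ : 0 ≤ β) :
    0 ≤ ω' * passDownFactor a P * β ∧
      ω' * passDownFactor a P * β ≤ ω * passDownFactor (a + D) (P + D) * β := by
  have hf := passDownFactor_nonneg ha haP
  refine ⟨by positivity, mul_le_mul_of_nonneg_right ?_ hβ⟩
  exact mul_le_mul hω'ω (passDownFactor_le_add ha haP hD) hf (hω'.trans hω'ω)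

theorem prst_blocking_decreases_Omega_general {V : Type*} (s : V) (p : V → V)
    (c c' : V → ℕ) (Ω Ω' : V → ℝ) (α : ℝ) (hα1 : α < 1)
    (hΩs : Ω s = 1) (hΩ's : Ω' s = 1)
    (hcard' : ∀ j, j ≠ s → c' j + 1 ≤ c' (p j))
    (hΩrec : ∀ j, j ≠ s → Ω j =
      Ω (p j) * (((c j : ℝ) + 1) / (c (p j) : ℝ) -
        1 / ((c (p j) : ℝ) - (c j : ℝ))) * (1 - α))
    (hΩ'rec : ∀ j, j ≠ s → Ω' j =
      Ω' (p j) * (((c' j : ℝ) + 1) / (c' (p j) : ℝ) -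
        1 / ((c' (p j) : ℝ) - (c' j : ℝ))) * (1 - α))
    (i : V) (Δ m : ℕ)
    (hpath : p^[m] i = s)
    (hne : ∀ k, k < m → p^[k] i ≠ s)
    (hdrop : ∀ k, k ≤ m → c' (p^[k] i) + Δ = c (p^[k] i)) :
    ∀ k, 1 ≤ k → k ≤ m → Ω' (p^[k] i) ≤ Ω (p^[k] i) := by
  rintro k - hkm
  suffices h : 0 ≤ Ω' (p^[k] i) ∧ Ω' (p^[k] i) ≤ Ω (p^[k] i) from h.2
  induction hkm using Nat.decreasingInduction with
  | self => simp [hpath, hΩs, hΩ's]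
  | of_succ k hk ih =>
    have hj := hne k hk
    have hparent : p (p^[k] i) = p^[k + 1] i := (Function.iterate_succ_apply' p k i).symm
    have hc : (c (p^[k] i) : ℝ) = c' (p^[k] i) + Δ := by
      exact_mod_cast (hdrop k hk.le).symm
    have hcp : (c (p (p^[k] i)) : ℝ) = c' (p (p^[k] i)) + Δ := by
      rw [hparent]; exact_mod_cast (hdrop (k + 1) hk).symm
    rw [hΩ'rec _ hj, hΩrec _ hj, hc, hcp, hparent]
    exact mul_passDownFactor_le ih.1 ih.2 (Nat.cast_nonneg _)
      (by rw [← hparent]; exact_mod_cast hcard' _ hj) (Nat.cast_nonneg _) (by linarith)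

/-- PRST: after blocking Δ descendants below node i, every ancestor's pass-down proportion
weakly decreases: Ω_j' ≤ Ω_j along the path from s to i. -/
theorem prst_blocking_decreases_Omega {V : Type*} (s : V) (p : V → V)
    (c c' : V → ℕ) (Ω Ω' : V → ℝ) (α : ℝ) (hα0 : 0 < α) (hα1 : α < 1)
    (hroot : p s = s)
    (hΩs : Ω s = 1) (hΩ's : Ω' s = 1)
    (hcard : ∀ j, j ≠ s → c j + 1 ≤ c (p j))
    (hcard' : ∀ j, j ≠ s → c' j + 1 ≤ c' (p j))
    (hΩrec : ∀ j, j ≠ s → Ω j =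
      Ω (p j) * (((c j : ℝ) + 1) / (c (p j) : ℝ) -
        1 / ((c (p j) : ℝ) - (c j : ℝ))) * (1 - α))
    (hΩ'rec : ∀ j, j ≠ s → Ω' j =
      Ω' (p j) * (((c' j : ℝ) + 1) / (c' (p j) : ℝ) -
        1 / ((c' (p j) : ℝ) - (c' j : ℝ))) * (1 - α))
    (i : V) (Δ m : ℕ)
    (hpath : p^[m] i = s)
    (hne : ∀ k, k < m → p^[k] i ≠ s)
    (hdrop : ∀ k, k ≤ m → c' (p^[k] i) + Δ = c (p^[k] i)) :
    ∀ k, 1 ≤ k → k ≤ m → Ω' (p^[k] i) ≤ Ω (p^[k] i) :=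
  prst_blocking_decreases_Omega_general s p c c' Ω Ω' α hα1 hΩs hΩ's hcard' hΩrec hΩ'rec i Δ m hpath
    hne hdrop
end

section
/- In the PRST scheme, the total share received by each subtree rooted at a child of the root is proportional to its size: for each child m of the root s, Σ_{i ∈ {m} ∪ C_m} ω_i = (|C_m|+1)/n, where n is the total number of non-root nodes. -/
/-- PRST: the total share of each subtree rooted at a child m of the root is (|C_m|+1)/n,
where n is the number of non-root nodes. -/
theorem prst_subtree_total_share {V : Type*} [Fintype V] [DecidableEq V]
    (s : V) (p : V → V) (C : V → Finset V)
    (ω Ω : V → ℝ) (α : ℝ) (hα0 : 0 < α) (hα1 : α < 1)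
    (hroot : p s = s)
    (hreach : ∀ v, ∃ n, p^[n] v = s)
    (hC : ∀ i j, j ∈ C i ↔ j ≠ i ∧ ∃ n, p^[n] j = i)
    (hΩs : Ω s = 1)
    (hω : ∀ i, i ≠ s → ω i =
      Ω (p i) * (1 / (((C (p i)).card : ℝ) - ((C i).card : ℝ)) +
        ((((C i).card : ℝ) + 1) / ((C (p i)).card : ℝ) -
          1 / (((C (p i)).card : ℝ) - ((C i).card : ℝ))) * α))
    (hΩ : ∀ i, i ≠ s → Ω i =
      Ω (p i) * ((((C i).card : ℝ) + 1) / ((C (p i)).card : ℝ) -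
        1 / (((C (p i)).card : ℝ) - ((C i).card : ℝ))) * (1 - α))
    (m : V) (hm : m ≠ s) (hpm : p m = s) :
    ∑ i ∈ insert m (C m), ω i =
      (((C m).card : ℝ) + 1) / ((Finset.univ.filter (fun v => v ≠ s)).card : ℝ) := by
  have ps : ∀ k, p^[k] s = s := fun k => Function.iterate_fixed hroot k
  have noloop : ∀ i, i ≠ s → ∀ k, p^[k] i = i → k = 0 := by
    intro i hi k hk
    by_contra hk0
    obtain ⟨N, hN⟩ := hreach i
    apply hi
    have h1 : p^[k * N] i = i := by
      rw [Function.iterate_mul]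
      exact Function.iterate_fixed hk N
    have hle : N ≤ k * N := Nat.le_mul_of_pos_left N (Nat.pos_of_ne_zero hk0)
    have h2 : p^[k * N] i = s := by
      rw [show k * N = (k * N - N) + N by omega, Function.iterate_add_apply, hN, ps]
    rw [h1] at h2; exact h2
  have uniq : ∀ i, i ≠ s → ∀ x a b, p^[a] x = i → p^[b] x = i → a = b := by
    intro i hi x a b ha hb
    rcases le_total a b with h | h
    · have hcyc : p^[b - a] i = i := by
        have h2 : p^[b - a] (p^[a] x) = p^[b] x := by
          rw [← Function.iterate_add_apply]
          congr 1
          omega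
        rw [ha, hb] at h2
        exact h2
      have := noloop i hi _ hcyc
      omega
    · have hcyc : p^[a - b] i = i := by
        have h2 : p^[a - b] (p^[b] x) = p^[a] x := by
          rw [← Function.iterate_add_apply]
          congr 1
          omega
        rw [hb, ha] at h2
        exact h2
      have := noloop i hi _ hcyc
      omega
  have key : ∀ N : ℕ, ∀ i, i ≠ s → (C i).card = N →
      ∑ j ∈ insert i (C i), ω j =
        Ω (p i) * ((((C i).card : ℝ) + 1) / ((C (p i)).card : ℝ)) := by
    intro N
    induction N using Nat.strong_induction_on with
    | _ N IH =>
      intro i hi hcard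
      have hinotC : i ∉ C i := fun h => ((hC i i).mp h).1 rfl
      rcases Finset.eq_empty_or_nonempty (C i) with hCi | hCi
      · rw [Finset.sum_insert hinotC, hCi, Finset.sum_empty, add_zero,
          hω i hi, hCi]
        simp only [Finset.card_empty, Nat.cast_zero, sub_zero]
        ring
      · -- nonempty case
        set ch := (C i).filter (fun c => p c = i) with hch
        have hchmem : ∀ c ∈ ch, p c = i ∧ c ≠ i ∧ c ≠ s := by
          intro c hc
          rw [hch, Finset.mem_filter] at hc
          refine ⟨hc.2, ((hC i c).mp hc.1).1, ?_⟩
          intro h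
          rw [h, hroot] at hc
          exact hi hc.2.symm
        have hanc : ∀ c ∈ ch, ∀ j ∈ insert c (C c), ∃ a, p^[a] j = c := by
          intro c hc j hj
          rcases Finset.mem_insert.mp hj with h | h
          · exact ⟨0, h⟩
          · obtain ⟨_, a, ha⟩ := (hC c j).mp h
            exact ⟨a, ha⟩
        have huniqc : ∀ c ∈ ch, ∀ c' ∈ ch, ∀ j, j ∈ insert c (C c) →
            j ∈ insert c' (C c') → c = c' := by
          intro c hc c' hc' j hj hj'
          obtain ⟨a, ha⟩ := hanc c hc j hj
          obtain ⟨b, hb⟩ := hanc c' hc' j hj'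
          have ha' : p^[a + 1] j = i := by
            rw [Function.iterate_succ_apply', ha, (hchmem c hc).1]
          have hb' : p^[b + 1] j = i := by
            rw [Function.iterate_succ_apply', hb, (hchmem c' hc').1]
          have : a + 1 = b + 1 := uniq i hi j _ _ ha' hb'
          have hab : a = b := by omega
          rw [← ha, hab, hb]
        have hsub : ∀ c ∈ ch, ∀ j ∈ insert c (C c), j ∈ C i := by
          intro c hc j hj
          rcases Finset.mem_insert.mp hj with h | h
          · rw [h]; rw [hch, Finset.mem_filter] at hc; exact hc.1
          · obtain ⟨hne, k, hk⟩ := (hC c j).mp h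
            have hki : p^[k + 1] j = i := by
              rw [Function.iterate_succ_apply', hk, (hchmem c hc).1]
            refine (hC i j).mpr ⟨?_, k + 1, hki⟩
            intro h
            rw [h] at hki
            exact Nat.succ_ne_zero k (noloop i hi _ hki)
        have hpart : C i = ch.biUnion (fun c => insert c (C c)) := by
          ext j
          rw [Finset.mem_biUnion]
          constructor
          · intro hj
            obtain ⟨hji, n, hn⟩ := (hC i j).mp hj
            have hn0 : n ≠ 0 := by
              intro h; rw [h] at hn; exact hji hn
            set c := p^[n - 1] j with hcdef
            have hpc : p c = i := by
              have h := Function.iterate_succ_apply' p (n - 1) j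
              rw [show (n - 1).succ = n by omega] at h
              rw [hcdef, ← h, hn]
            have hci : c ≠ i := by
              intro h
              have := uniq i hi j (n - 1) n (by rw [← h]) hn
              omega
            have hcC : c ∈ C i := (hC i c).mpr ⟨hci, 1, by simpa using hpc⟩
            have hcch : c ∈ ch := by rw [hch, Finset.mem_filter]; exact ⟨hcC, hpc⟩
            refine ⟨c, hcch, ?_⟩
            by_cases hjc : j = c
            · rw [hjc]; exact Finset.mem_insert_self c _
            · exact Finset.mem_insert_of_mem ((hC c j).mpr ⟨hjc, n - 1, rfl⟩)
          · rintro ⟨c, hc, hj⟩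
            exact hsub c hc j hj
        have hdisj : ∀ c ∈ ch, ∀ c' ∈ ch, c ≠ c' →
            Disjoint (insert c (C c)) (insert c' (C c')) := by
          intro c hc c' hc' hne
          rw [Finset.disjoint_left]
          intro j hj hj'
          exact hne (huniqc c hc c' hc' j hj hj')
        have hcardeq : (C i).card = ∑ c ∈ ch, ((C c).card + 1) := by
          rw [hpart, Finset.card_biUnion hdisj]
          refine Finset.sum_congr rfl fun c hc => ?_
          rw [Finset.card_insert_of_notMem (fun h => ((hC c c).mp h).1 rfl)]
        have hIH : ∀ c ∈ ch, ∑ j ∈ insert c (C c), ω j =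
            Ω i * ((((C c).card : ℝ) + 1) / ((C i).card : ℝ)) := by
          intro c hc
          obtain ⟨hpc, hci, hcs⟩ := hchmem c hc
          have hcC : c ∈ C i := by rw [hch, Finset.mem_filter] at hc; exact hc.1
          have hlt : (C c).card < N := by
            rw [← hcard]
            have hss : C c ⊂ C i := by
              constructor
              · intro j hj
                exact hsub c hc j (Finset.mem_insert_of_mem hj)
              · intro h
                exact ((hC c c).mp (h hcC)).1 rfl
            exact Finset.card_lt_card hss
          have := IH (C c).card hlt c hcs rfl
          rw [this, hpc]
        have hx : (0 : ℝ) < ((C i).card : ℝ) := by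
          exact_mod_cast Finset.card_pos.mpr hCi
        have hOm : ∑ j ∈ C i, ω j = Ω i := by
          rw [hpart, Finset.sum_biUnion hdisj, Finset.sum_congr rfl hIH]
          have h1 : ∑ c ∈ ch, Ω i * ((((C c).card : ℝ) + 1) / ((C i).card : ℝ)) =
              Ω i / ((C i).card : ℝ) * ∑ c ∈ ch, (((C c).card : ℝ) + 1) := by
            rw [Finset.mul_sum]
            exact Finset.sum_congr rfl fun c _ => by ring
          have h2 : ∑ c ∈ ch, (((C c).card : ℝ) + 1) = ((C i).card : ℝ) := by
            rw [hcardeq]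
            push_cast
            ring
          rw [h1, h2]
          exact div_mul_cancel₀ _ hx.ne'
        rw [Finset.sum_insert hinotC, hOm, hω i hi, hΩ i hi]
        ring
  have hCs : C s = Finset.univ.filter (fun v => v ≠ s) := by
    ext j
    rw [Finset.mem_filter, hC]
    simp only [Finset.mem_univ, true_and]
    exact ⟨fun h => h.1, fun h => ⟨h, hreach j⟩⟩
  have := key (C m).card m hm rfl
  rw [this, hpm, hΩs, one_mul, hCs]
end
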